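/- arXiv:2510.16132 — 2 statements merged into one kernel-verified Lean document; each statement's English description precedes it below -/
import Mathlib

section
/- Let μ̄₁, μ̄₂ be probability distributions on S × A and let Q₁, Q₂ : S × A → ℝ satisfy ‖Q₁‖∞ ≤ 1/(1−γ) and ‖Q₂‖∞ ≤ 1/(1−γ). Then ‖F̄(Q₁,μ̄₁) − F̄(Q₂,μ̄₂)‖∞ ≤ 3 ‖Q₁ − Q₂‖∞ + (2/(1−γ)) · max_{(s,a)} |μ̄₁(s,a) − μ̄₂(s,a)|. -/
/-!
Pointwise, `F̄(Q₁,μ₁) − F̄(Q₂,μ₂) = (1 − μ₁)(Q₁ − Q₂) + μ₁(HQ₁ − HQ₂) + (μ₁ − μ₂)(HQ₂ − Q₂)`.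
Since `H` is a `γ`-contraction in the sup norm and `0 ≤ μ₁ ≤ 1`, the first two terms together are
at most `‖Q₁ − Q₂‖∞`. For the last one, `‖Q₂‖∞ ≤ 1/(1−γ)` and `|R| ≤ 1` give
`‖HQ₂‖∞ ≤ 1 + γ/(1−γ) = 1/(1−γ)`.
-/

section

variable {S A : Type*} [Fintype S] [Fintype A] [Nonempty S] [Nonempty A]

/-- Sup norm on `S × A → ℝ`. -/
noncomputable def supNorm (Q : S × A → ℝ) : ℝ :=
  Finset.univ.sup' Finset.univ_nonempty fun y => |Q y|

/-- The Bellman optimality operator. -/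
noncomputable def bellmanOpt (p : S × A → S → ℝ) (R : S × A → ℝ) (γ : ℝ)
    (Q : S × A → ℝ) : S × A → ℝ :=
  fun sa => R sa + γ * ∑ s', p sa s' *
    (Finset.univ.sup' Finset.univ_nonempty fun a' => Q (s', a'))

/-- The expected operator `F̄(Q,μ̄)(s,a) = (1 − μ̄(s,a)) Q(s,a) + μ̄(s,a) H(Q)(s,a)`. -/
noncomputable def Fbar (p : S × A → S → ℝ) (R : S × A → ℝ) (γ : ℝ)
    (μ : S × A → ℝ) (Q : S × A → ℝ) : S × A → ℝ :=
  fun sa => (1 - μ sa) * Q sa + μ sa * bellmanOpt p R γ Q sa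

lemma Finset.sup'_le_sup'_add {ι : Type*} {s : Finset ι} (hs : s.Nonempty) {f g : ι → ℝ} {c : ℝ}
    (h : ∀ i ∈ s, f i ≤ g i + c) : s.sup' hs f ≤ s.sup' hs g + c :=
  Finset.sup'_le _ _ fun i hi => (h i hi).trans (by gcongr; exact Finset.le_sup' g hi)

lemma Finset.abs_sup'_sub_sup'_le {ι : Type*} {s : Finset ι} (hs : s.Nonempty) {f g : ι → ℝ}
    {c : ℝ} (h : ∀ i ∈ s, |f i - g i| ≤ c) : |s.sup' hs f - s.sup' hs g| ≤ c := by
  have hfg := Finset.sup'_le_sup'_add hs (f := f) (g := g) (c := c)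
    fun i hi => by linarith [(abs_sub_le_iff.mp (h i hi)).1]
  have hgf := Finset.sup'_le_sup'_add hs (f := g) (g := f) (c := c)
    fun i hi => by linarith [(abs_sub_le_iff.mp (h i hi)).2]
  exact abs_sub_le_iff.mpr ⟨by linarith, by linarith⟩

lemma abs_sum_mul_le_of_sum_eq_one {ι : Type*} [Fintype ι] {w f : ι → ℝ} {c : ℝ}
    (hw0 : ∀ i, 0 ≤ w i) (hw1 : ∑ i, w i = 1) (hf : ∀ i, |f i| ≤ c) :
    |∑ i, w i * f i| ≤ c :=
  calc |∑ i, w i * f i| ≤ ∑ i, |w i * f i| := Finset.abs_sum_le_sum_abs _ _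
    _ ≤ ∑ i, w i * c := Finset.sum_le_sum fun i _ => by
        rw [abs_mul, abs_of_nonneg (hw0 i)]; exact mul_le_mul_of_nonneg_left (hf i) (hw0 i)
    _ = c := by rw [← Finset.sum_mul, hw1, one_mul]

lemma abs_convexComb_sub_convexComb_le {m₁ m₂ q₁ q₂ h₁ h₂ : ℝ} (h0 : 0 ≤ m₁) (h1 : m₁ ≤ 1) :
    |((1 - m₁) * q₁ + m₁ * h₁) - ((1 - m₂) * q₂ + m₂ * h₂)| ≤
      (1 - m₁) * |q₁ - q₂| + m₁ * |h₁ - h₂| + |m₁ - m₂| * (|q₂| + |h₂|) := by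
  have hdecomp : ((1 - m₁) * q₁ + m₁ * h₁) - ((1 - m₂) * q₂ + m₂ * h₂) =
      (1 - m₁) * (q₁ - q₂) + m₁ * (h₁ - h₂) + (m₁ - m₂) * (h₂ - q₂) := by ring
  rw [hdecomp]
  calc _ ≤ |(1 - m₁) * (q₁ - q₂)| + |m₁ * (h₁ - h₂)| + |(m₁ - m₂) * (h₂ - q₂)| :=
        abs_add_three _ _ _
    _ ≤ _ := by
      rw [abs_mul, abs_mul, abs_mul, abs_of_nonneg (sub_nonneg.mpr h1), abs_of_nonneg h0]
      gcongr
      exact (abs_sub _ _).trans_eq (add_comm _ _)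

lemma le_supNorm (Q : S × A → ℝ) (sa : S × A) : |Q sa| ≤ supNorm Q :=
  Finset.le_sup' (fun y => |Q y|) (Finset.mem_univ sa)

lemma supNorm_le {Q : S × A → ℝ} {c : ℝ} (h : ∀ sa, |Q sa| ≤ c) : supNorm Q ≤ c :=
  Finset.sup'_le _ _ fun sa _ => h sa

lemma supNorm_nonneg (Q : S × A → ℝ) : 0 ≤ supNorm Q :=
  (abs_nonneg _).trans (le_supNorm Q (Classical.arbitrary _))

section Bellman

variable {p : S × A → S → ℝ} {R : S × A → ℝ} {γ : ℝ}

lemma abs_bellmanOpt_sub_le (hp0 : ∀ sa s', 0 ≤ p sa s') (hp1 : ∀ sa, ∑ s', p sa s' = 1)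
    (hγ : 0 ≤ γ) (Q₁ Q₂ : S × A → ℝ) (sa : S × A) :
    |bellmanOpt p R γ Q₁ sa - bellmanOpt p R γ Q₂ sa| ≤ γ * supNorm (Q₁ - Q₂) := by
  have hmax : ∀ s', |(Finset.univ.sup' Finset.univ_nonempty fun a' => Q₁ (s', a')) -
      Finset.univ.sup' Finset.univ_nonempty fun a' => Q₂ (s', a')| ≤ supNorm (Q₁ - Q₂) :=
    fun s' => Finset.abs_sup'_sub_sup'_le Finset.univ_nonempty
      fun a _ => by simpa using le_supNorm (Q₁ - Q₂) (s', a)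
  have hdiff : bellmanOpt p R γ Q₁ sa - bellmanOpt p R γ Q₂ sa =
      γ * ∑ s', p sa s' * ((Finset.univ.sup' Finset.univ_nonempty fun a' => Q₁ (s', a')) -
        Finset.univ.sup' Finset.univ_nonempty fun a' => Q₂ (s', a')) := by
    simp only [bellmanOpt, mul_sub, Finset.sum_sub_distrib]
    ring
  rw [hdiff, abs_mul, abs_of_nonneg hγ]
  gcongr
  exact abs_sum_mul_le_of_sum_eq_one (hp0 sa) (hp1 sa) hmax

lemma abs_bellmanOpt_le (hp0 : ∀ sa s', 0 ≤ p sa s') (hp1 : ∀ sa, ∑ s', p sa s' = 1)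
    (hR : ∀ sa, |R sa| ≤ 1) (hγ : 0 ≤ γ) (Q : S × A → ℝ) (sa : S × A) :
    |bellmanOpt p R γ Q sa| ≤ 1 + γ * supNorm Q := by
  have hzero : bellmanOpt p R γ 0 sa = R sa := by simp [bellmanOpt]
  calc |bellmanOpt p R γ Q sa|
      = |R sa + (bellmanOpt p R γ Q sa - bellmanOpt p R γ 0 sa)| := by rw [hzero, add_sub_cancel]
    _ ≤ |R sa| + |bellmanOpt p R γ Q sa - bellmanOpt p R γ 0 sa| := abs_add_le _ _
    _ ≤ 1 + γ * supNorm Q := by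
        gcongr
        · exact hR sa
        · simpa using abs_bellmanOpt_sub_le hp0 hp1 hγ Q 0 sa

end Bellman

theorem stmt_3_general
    (p : S × A → S → ℝ)
    (hp0 : ∀ sa s', 0 ≤ p sa s')
    (hp1 : ∀ sa, ∑ s', p sa s' = 1)
    (R : S × A → ℝ) (hR : ∀ sa, |R sa| ≤ 1)
    (γ : ℝ) (hγ0 : 0 < γ) (hγ1 : γ < 1)
    (μ₁ μ₂ : S × A → ℝ)
    (hμ₁0 : ∀ sa, 0 ≤ μ₁ sa) (hμ₁1 : ∑ sa, μ₁ sa = 1)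
    (Q₁ Q₂ : S × A → ℝ)
    (hQ₂ : supNorm Q₂ ≤ 1 / (1 - γ)) :
    supNorm (Fbar p R γ μ₁ Q₁ - Fbar p R γ μ₂ Q₂) ≤
      3 * supNorm (Q₁ - Q₂) + 2 / (1 - γ) * supNorm (μ₁ - μ₂) := by
  set D := supNorm (Q₁ - Q₂)
  set M := supNorm (μ₁ - μ₂)
  have hD : 0 ≤ D := supNorm_nonneg _
  have hB : 1 + γ * (1 / (1 - γ)) = 1 / (1 - γ) := by field_simp [(sub_pos.mpr hγ1).ne']; ring
  refine supNorm_le fun sa => ?_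
  have hμ₁le : μ₁ sa ≤ 1 := hμ₁1 ▸ Finset.single_le_sum (fun i _ => hμ₁0 i) (Finset.mem_univ sa)
  have hdQ : |Q₁ sa - Q₂ sa| ≤ D := by simpa using le_supNorm (Q₁ - Q₂) sa
  have hdμ : |μ₁ sa - μ₂ sa| ≤ M := by simpa using le_supNorm (μ₁ - μ₂) sa
  have hQ₂sa : |Q₂ sa| ≤ 1 / (1 - γ) := (le_supNorm Q₂ sa).trans hQ₂
  have hH₂ : |bellmanOpt p R γ Q₂ sa| ≤ 1 / (1 - γ) :=
    hB ▸ (abs_bellmanOpt_le hp0 hp1 hR hγ0.le Q₂ sa).trans (by gcongr)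
  have hdH : |bellmanOpt p R γ Q₁ sa - bellmanOpt p R γ Q₂ sa| ≤ D :=
    (abs_bellmanOpt_sub_le hp0 hp1 hγ0.le Q₁ Q₂ sa).trans (mul_le_of_le_one_left hD hγ1.le)
  calc _ ≤ (1 - μ₁ sa) * D + μ₁ sa * D + M * (1 / (1 - γ) + 1 / (1 - γ)) := by
        dsimp only [Pi.sub_apply, Fbar]
        refine (abs_convexComb_sub_convexComb_le (hμ₁0 sa) hμ₁le).trans ?_
        gcongr
        · exact hμ₁0 sa
        · exact supNorm_nonneg _
    _ = D + 2 / (1 - γ) * M := by ring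
    _ ≤ 3 * D + 2 / (1 - γ) * M := by linarith

/-- Joint Lipschitz-type bound for `F̄` in `(Q, μ̄)`. -/
theorem stmt_3
    (p : S × A → S → ℝ)
    (hp0 : ∀ sa s', 0 ≤ p sa s')
    (hp1 : ∀ sa, ∑ s', p sa s' = 1)
    (R : S × A → ℝ) (hR : ∀ sa, |R sa| ≤ 1)
    (γ : ℝ) (hγ0 : 0 < γ) (hγ1 : γ < 1)
    (μ₁ μ₂ : S × A → ℝ)
    (hμ₁0 : ∀ sa, 0 ≤ μ₁ sa) (hμ₁1 : ∑ sa, μ₁ sa = 1)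
    (hμ₂0 : ∀ sa, 0 ≤ μ₂ sa) (hμ₂1 : ∑ sa, μ₂ sa = 1)
    (Q₁ Q₂ : S × A → ℝ)
    (hQ₁ : supNorm Q₁ ≤ 1 / (1 - γ)) (hQ₂ : supNorm Q₂ ≤ 1 / (1 - γ)) :
    supNorm (Fbar p R γ μ₁ Q₁ - Fbar p R γ μ₂ Q₂) ≤
      3 * supNorm (Q₁ - Q₂) + 2 / (1 - γ) * supNorm (μ₁ - μ₂) :=
  stmt_3_general p hp0 hp1 R hR γ hγ0 hγ1 μ₁ μ₂ hμ₁0 hμ₁1 Q₁ Q₂ hQ₂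

end
end

section
/- Let ε ∈ [0,1], τ > 0, and let Q : S × A → ℝ satisfy ‖Q‖∞ ≤ 1/(1−γ). Let π be the ε-softmax policy of Q with temperature τ. Then ‖H_π(Q) − H(Q)‖∞ ≤ 2ε/(1−γ) + τ · log|A|. -/
/-! At `(s, a)` the difference `H_π Q - H Q` is `γ` times a `p`-average over `s'` of the gap
between the `π`-average of `q = Q (s', ·)` and `max q`, so it suffices to bound that gap for one
state. For the softmax `σ ∝ exp (q / τ)` one has `q = τ (log σ + log Z)`, so the `σ`-average of `q`
is `τ log Z - τ H(σ)`; here `τ log Z ≥ max q` and the entropy `H(σ)` is at most `log |A|`.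
Mixing in the uniform policy with weight `ε` costs at most `ε (max q - mean q) ≤ 2ε/(1-γ)`. -/

section

variable {S A : Type*} [Fintype S] [Fintype A] [Nonempty S] [Nonempty A]

/-- The policy Bellman operator `H_π`. -/
noncomputable def bellmanPol (p : S × A → S → ℝ) (R : S × A → ℝ) (γ : ℝ)
    (π : S → A → ℝ) (Q : S × A → ℝ) : S × A → ℝ :=
  fun sa => R sa + γ * ∑ s', ∑ a', p sa s' * π s' a' * Q (s', a')

/-- The `ε`-softmax policy of `Q` with temperature `τ`. -/
noncomputable def softmaxPolicy (Q : S × A → ℝ) (ε τ : ℝ) : S → A → ℝ :=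
  fun s a => ε / (Fintype.card A : ℝ) +
    (1 - ε) * Real.exp (Q (s, a) / τ) / ∑ a', Real.exp (Q (s, a') / τ)

open Finset Real

lemma sum_mul_le_sup' {ι : Type*} [Fintype ι] [Nonempty ι] {w : ι → ℝ}
    (hw0 : ∀ i, 0 ≤ w i) (hw1 : ∑ i, w i = 1) (q : ι → ℝ) :
    ∑ i, w i * q i ≤ univ.sup' univ_nonempty q :=
  calc ∑ i, w i * q i ≤ ∑ i, w i * univ.sup' univ_nonempty q :=
        sum_le_sum fun i _ => mul_le_mul_of_nonneg_left (le_sup' q (mem_univ i)) (hw0 i)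
    _ = univ.sup' univ_nonempty q := by rw [← sum_mul, hw1, one_mul]

lemma abs_sum_mul_le_of_abs_le {ι : Type*} [Fintype ι] {w f : ι → ℝ} {B : ℝ}
    (hw0 : ∀ i, 0 ≤ w i) (hw1 : ∑ i, w i = 1) (hf : ∀ i, |f i| ≤ B) :
    |∑ i, w i * f i| ≤ B :=
  calc |∑ i, w i * f i| ≤ ∑ i, w i * |f i| := (abs_sum_le_sum_abs _ _).trans_eq <| by
        simp only [abs_mul, abs_of_nonneg (hw0 _)]
    _ ≤ ∑ i, w i * B := sum_le_sum fun i _ => mul_le_mul_of_nonneg_left (hf i) (hw0 i)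
    _ = B := by rw [← sum_mul, hw1, one_mul]

lemma neg_log_card_le_sum_mul_log {ι : Type*} [Fintype ι] {w : ι → ℝ}
    (hw : ∀ i, 0 < w i) (hw1 : ∑ i, w i = 1) :
    -log (Fintype.card ι) ≤ ∑ i, w i * log (w i) := by
  -- Jensen for `log` at the points `(w i)⁻¹`.
  have hJensen := strictConcaveOn_log_Ioi.concaveOn.le_map_sum (t := univ) (p := fun i => (w i)⁻¹)
    (fun i _ => (hw i).le) hw1 fun i _ => Set.mem_Ioi.2 (inv_pos.2 (hw i))
  have hcard : ∑ i, w i * (w i)⁻¹ = (Fintype.card ι : ℝ) := by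
    simp [mul_inv_cancel₀ (hw _).ne']
  simp only [smul_eq_mul, hcard, log_inv, mul_neg, sum_neg_distrib] at hJensen
  linarith

noncomputable def softmax {ι : Type*} [Fintype ι] (τ : ℝ) (q : ι → ℝ) (i : ι) : ℝ :=
  exp (q i / τ) / ∑ j, exp (q j / τ)

section Softmax

variable {ι : Type*} [Fintype ι] [Nonempty ι] (τ : ℝ) (q : ι → ℝ)

lemma sum_exp_div_pos : 0 < ∑ j, exp (q j / τ) :=
  sum_pos (fun _ _ => exp_pos _) univ_nonempty

lemma softmax_pos (i : ι) : 0 < softmax τ q i :=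
  div_pos (exp_pos _) (sum_exp_div_pos τ q)

lemma sum_softmax : ∑ i, softmax τ q i = 1 := by
  simp only [softmax]
  rw [← sum_div, div_self (sum_exp_div_pos τ q).ne']

lemma sup'_le_mul_log_sum_exp (hτ : 0 < τ) :
    univ.sup' univ_nonempty q ≤ τ * log (∑ j, exp (q j / τ)) := by
  obtain ⟨i, -, hi⟩ := exists_mem_eq_sup' univ_nonempty q
  have hexp : exp (q i / τ) ≤ ∑ j, exp (q j / τ) :=
    single_le_sum (f := fun j => exp (q j / τ)) (fun j _ => (exp_pos _).le) (mem_univ i)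
  have hlog := log_le_log (exp_pos _) hexp
  rw [log_exp, div_le_iff₀' hτ] at hlog
  rwa [hi]

lemma sup'_sub_mul_log_card_le_sum_softmax_mul (hτ : 0 < τ) :
    univ.sup' univ_nonempty q - τ * log (Fintype.card ι) ≤ ∑ i, softmax τ q i * q i := by
  set Z := ∑ j, exp (q j / τ)
  have hq : ∀ i, q i = τ * (log (softmax τ q i) + log Z) := fun i => by
    rw [softmax, log_div (exp_pos _).ne' (sum_exp_div_pos τ q).ne', log_exp]
    field_simp
    ring
  have havg : ∑ i, softmax τ q i * q i =
      τ * ∑ i, softmax τ q i * log (softmax τ q i) + τ * log Z := by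
    calc ∑ i, softmax τ q i * q i
        = ∑ i, (τ * (softmax τ q i * log (softmax τ q i)) + τ * log Z * softmax τ q i) :=
          sum_congr rfl fun i _ => by rw [hq i]; ring
      _ = _ := by rw [sum_add_distrib, ← mul_sum, ← mul_sum, sum_softmax, mul_one]
  have hent := neg_log_card_le_sum_mul_log (softmax_pos τ q) (sum_softmax τ q)
  have hsup := sup'_le_mul_log_sum_exp τ q hτ
  rw [havg]
  linarith [mul_le_mul_of_nonneg_left hent hτ.le]

end Softmax

lemma abs_sum_epsSoftmax_mul_sub_sup'_le {ι : Type*} [Fintype ι] [Nonempty ι] (q : ι → ℝ)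
    {C ε τ : ℝ} (hq : ∀ i, |q i| ≤ C) (hε0 : 0 ≤ ε) (hε1 : ε ≤ 1) (hτ : 0 < τ) :
    |∑ i, (ε / Fintype.card ι + (1 - ε) * softmax τ q i) * q i - univ.sup' univ_nonempty q| ≤
      2 * ε * C + τ * log (Fintype.card ι) := by
  set n : ℝ := (Fintype.card ι : ℝ)
  set M := univ.sup' univ_nonempty q
  have hn : 0 < n := Nat.cast_pos.2 Fintype.card_pos
  have hlog : 0 ≤ τ * log n := mul_nonneg hτ.le (log_nonneg (Nat.one_le_cast.2 Fintype.card_pos))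
  have hw0 : ∀ i, 0 ≤ ε / n + (1 - ε) * softmax τ q i := fun i =>
    add_nonneg (div_nonneg hε0 hn.le) (mul_nonneg (sub_nonneg.2 hε1) (softmax_pos τ q i).le)
  have hw1 : ∑ i, (ε / n + (1 - ε) * softmax τ q i) = 1 := by
    rw [sum_add_distrib, ← mul_sum, sum_softmax, sum_const, card_univ, nsmul_eq_mul]
    field_simp
    ring
  have hsplit : ∑ i, (ε / n + (1 - ε) * softmax τ q i) * q i =
      ε * (∑ i, q i / n) + (1 - ε) * ∑ i, softmax τ q i * q i := by
    simp only [add_mul, sum_add_distrib, mul_sum]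
    congr 1 <;> exact sum_congr rfl fun i _ => by ring
  have hmean : -C ≤ ∑ i, q i / n := by
    have hsum : ∑ _i : ι, -C ≤ ∑ i, q i := sum_le_sum fun i _ => (abs_le.1 (hq i)).1
    rw [sum_const, card_univ, nsmul_eq_mul] at hsum
    change n * -C ≤ _ at hsum
    rw [← sum_div, le_div_iff₀ hn]
    linarith
  have hM : M ≤ C := sup'_le _ _ fun i _ => (abs_le.1 (hq i)).2
  have hsoft := sup'_sub_mul_log_card_le_sum_softmax_mul τ q hτ
  have hupper := sum_mul_le_sup' hw0 hw1 q
  have hC : 0 ≤ C := (abs_nonneg _).trans (hq (Classical.arbitrary ι))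
  rw [abs_sub_le_iff]
  constructor
  · linarith [mul_nonneg (mul_nonneg zero_le_two hε0) hC]
  · rw [hsplit]
    linarith [mul_le_mul_of_nonneg_left hmean hε0, mul_le_mul_of_nonneg_left hM hε0,
      mul_le_mul_of_nonneg_left hsoft (sub_nonneg.2 hε1), mul_nonneg hε0 hlog]

lemma bellmanPol_sub_bellmanOpt {S A : Type*} [Fintype S] [Fintype A] [Nonempty A]
    (p : S × A → S → ℝ) (R : S × A → ℝ) (γ : ℝ) (pol : S → A → ℝ) (Q : S × A → ℝ) (sa : S × A) :
    bellmanPol p R γ pol Q sa - bellmanOpt p R γ Q sa =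
      γ * ∑ s', p sa s' *
        (∑ a', pol s' a' * Q (s', a') - univ.sup' univ_nonempty fun a' => Q (s', a')) := by
  simp only [bellmanPol, bellmanOpt, mul_sub, sum_sub_distrib, mul_sum, mul_assoc]
  ring

theorem stmt_15_general
    (p : S × A → S → ℝ)
    (hp0 : ∀ sa s', 0 ≤ p sa s')
    (hp1 : ∀ sa, ∑ s', p sa s' = 1)
    (R : S × A → ℝ)
    (γ : ℝ) (hγ0 : 0 < γ) (hγ1 : γ < 1)
    (ε τ : ℝ) (hε0 : 0 ≤ ε) (hε1 : ε ≤ 1) (hτ : 0 < τ)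
    (Q : S × A → ℝ) (hQ : supNorm Q ≤ 1 / (1 - γ)) :
    supNorm (bellmanPol p R γ (softmaxPolicy Q ε τ) Q - bellmanOpt p R γ Q) ≤
      2 * ε / (1 - γ) + τ * Real.log (Fintype.card A) := by
  have hQ' : ∀ s a, |Q (s, a)| ≤ 1 / (1 - γ) := fun s a =>
    (le_sup' (fun y => |Q y|) (mem_univ (s, a))).trans hQ
  have hstate : ∀ s, |∑ a, softmaxPolicy Q ε τ s a * Q (s, a) -
      univ.sup' univ_nonempty (fun a => Q (s, a))| ≤
        2 * ε / (1 - γ) + τ * log (Fintype.card A) := fun s => by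
    simpa only [softmaxPolicy, softmax, mul_div_assoc, mul_one_div] using
      abs_sum_epsSoftmax_mul_sub_sup'_le (fun a => Q (s, a)) (hQ' s) hε0 hε1 hτ
  refine sup'_le _ _ fun sa _ => ?_
  rw [Pi.sub_apply, bellmanPol_sub_bellmanOpt, abs_mul, abs_of_pos hγ0]
  calc γ * |_| ≤ 1 * |_| := mul_le_mul_of_nonneg_right hγ1.le (abs_nonneg _)
    _ ≤ _ := (one_mul _).trans_le (abs_sum_mul_le_of_abs_le (hp0 sa) (hp1 sa) hstate)

/-- `‖H_π(Q) − H(Q)‖∞ ≤ 2ε/(1−γ) + τ log|A|` for the ε-softmax policy `π` of `Q`. -/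
theorem stmt_15
    (p : S × A → S → ℝ)
    (hp0 : ∀ sa s', 0 ≤ p sa s')
    (hp1 : ∀ sa, ∑ s', p sa s' = 1)
    (R : S × A → ℝ) (hR : ∀ sa, |R sa| ≤ 1)
    (γ : ℝ) (hγ0 : 0 < γ) (hγ1 : γ < 1)
    (ε τ : ℝ) (hε0 : 0 ≤ ε) (hε1 : ε ≤ 1) (hτ : 0 < τ)
    (Q : S × A → ℝ) (hQ : supNorm Q ≤ 1 / (1 - γ)) :
    supNorm (bellmanPol p R γ (softmaxPolicy Q ε τ) Q - bellmanOpt p R γ Q) ≤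
      2 * ε / (1 - γ) + τ * Real.log (Fintype.card A) :=
  stmt_15_general p hp0 hp1 R γ hγ0 hγ1 ε τ hε0 hε1 hτ Q hQ

end
end
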